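/- arXiv:2106.13624 — 2 statements merged into one kernel-verified Lean document; each statement's English description precedes it below -/
import Mathlib

section
/- Let b > 0, λ > 0, and let Z be a zero-mean real random variable with finite variance satisfying Z ≤ b almost surely. With φ(u) = e^u − u − 1, it holds that E[e^{λZ}] ≤ exp((φ(bλ)/b²) E[Z²]). -/
/-!
Write `φ(u) = exp u - u - 1`. Since `u ↦ φ(u) / u²` is non-decreasing and `λZ ≤ bλ`, pointwise
`exp (λZ) ≤ 1 + λZ + (φ(bλ) / b²) Z²`; taking expectations kills the linear term, and
`1 + x ≤ exp x` finishes. The monotonicity is a termwise comparison of power series for `u ≥ 0`,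
while for `u ≤ 0` it follows from `φ(u) ≤ u² / 2 ≤ φ(B) / B² · u²`.
-/

open MeasureTheory
open scoped Nat

namespace Real

lemma hasSum_exp_sub_sub_one (y : ℝ) :
    HasSum (fun n : ℕ => y ^ (n + 2) / (n + 2)!) (exp y - y - 1) := by
  have h := NormedSpace.expSeries_div_hasSum_exp y
  rw [← exp_eq_exp_ℝ] at h
  have hfirst : ∑ i ∈ Finset.range 2, y ^ i / i ! = 1 + y := by simp [Finset.sum_range_succ]
  simpa [hfirst, sub_sub, add_comm] using (hasSum_nat_add_iff' 2).mpr h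

lemma sq_mul_exp_sub_sub_one_le {y B : ℝ} (hy : 0 ≤ y) (hyB : y ≤ B) :
    B ^ 2 * (exp y - y - 1) ≤ y ^ 2 * (exp B - B - 1) := by
  refine hasSum_le (fun n => ?_) ((hasSum_exp_sub_sub_one y).mul_left _)
    ((hasSum_exp_sub_sub_one B).mul_left _)
  rw [mul_div_assoc', mul_div_assoc']
  gcongr ?_ / _
  calc B ^ 2 * y ^ (n + 2) = y ^ 2 * (B ^ 2 * y ^ n) := by ring
    _ ≤ y ^ 2 * (B ^ 2 * B ^ n) := by gcongr
    _ = y ^ 2 * B ^ (n + 2) := by ring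

lemma exp_le_quadratic_of_nonpos {y : ℝ} (hy : y ≤ 0) : exp y ≤ 1 + y + y ^ 2 / 2 := by
  have hderiv (t : ℝ) :
      HasDerivAt (fun t => 1 + t + t ^ 2 / 2 - exp t) (1 + t - exp t) t :=
    ((((hasDerivAt_id' t).const_add 1).add ((hasDerivAt_pow 2 t).div_const 2)).sub
      (hasDerivAt_exp t)).congr_deriv (by norm_num)
  have hanti : Antitone (fun t => 1 + t + t ^ 2 / 2 - exp t) := by
    refine antitone_of_deriv_nonpos (fun t => (hderiv t).differentiableAt) fun t => ?_
    rw [(hderiv t).deriv]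
    linarith [add_one_le_exp t]
  simpa using hanti hy

lemma exp_sub_sub_one_le_of_le {y B : ℝ} (hB : 0 < B) (hyB : y ≤ B) :
    exp y - y - 1 ≤ (exp B - B - 1) / B ^ 2 * y ^ 2 := by
  rw [div_mul_eq_mul_div, le_div_iff₀ (by positivity)]
  rcases le_total 0 y with hy | hy
  · linarith [sq_mul_exp_sub_sub_one_le hy hyB]
  · have hy' := exp_le_quadratic_of_nonpos hy
    have hB' := quadratic_le_exp_of_nonneg hB.le
    nlinarith [sq_nonneg y, sq_nonneg B]

lemma exp_mul_le_one_add_mul_add_mul_sq {z b l : ℝ} (hb : 0 < b) (hl : 0 < l) (hz : z ≤ b) :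
    exp (l * z) ≤ 1 + l * z + (exp (b * l) - b * l - 1) / b ^ 2 * z ^ 2 := by
  have h := exp_sub_sub_one_le_of_le (mul_pos hb hl) (by nlinarith : l * z ≤ b * l)
  have hscale : (exp (b * l) - b * l - 1) / (b * l) ^ 2 * (l * z) ^ 2
      = (exp (b * l) - b * l - 1) / b ^ 2 * z ^ 2 := by
    field_simp
  linarith

end Real

lemma integral_exp_mul_le_one_add_mul_integral_sq {Ω : Type*} [MeasurableSpace Ω]
    {P : Measure Ω} [IsProbabilityMeasure P] {Z : Ω → ℝ} (hZ : AEMeasurable Z P)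
    (hmean : ∫ ω, Z ω ∂P = 0) (h2 : Integrable (fun ω => Z ω ^ 2) P) {l c : ℝ}
    (hbound : ∀ᵐ ω ∂P, Real.exp (l * Z ω) ≤ 1 + l * Z ω + c * Z ω ^ 2) :
    ∫ ω, Real.exp (l * Z ω) ∂P ≤ 1 + c * ∫ ω, Z ω ^ 2 ∂P := by
  have hZint : Integrable Z P :=
    ((memLp_two_iff_integrable_sq hZ.aestronglyMeasurable).mpr h2).integrable one_le_two
  have hlin : Integrable (fun ω => 1 + l * Z ω) P := (integrable_const 1).add (hZint.const_mul l)
  have hquad : Integrable (fun ω => 1 + l * Z ω + c * Z ω ^ 2) P := hlin.add (h2.const_mul c)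
  have hexp : Integrable (fun ω => Real.exp (l * Z ω)) P := by
    refine hquad.mono' (hZ.const_mul l).exp.aestronglyMeasurable ?_
    filter_upwards [hbound] with ω hω
    rwa [Real.norm_of_nonneg (Real.exp_nonneg _)]
  calc ∫ ω, Real.exp (l * Z ω) ∂P ≤ ∫ ω, 1 + l * Z ω + c * Z ω ^ 2 ∂P :=
        integral_mono_ae hexp hquad hbound
    _ = 1 + c * ∫ ω, Z ω ^ 2 ∂P := by
      rw [integral_add hlin (h2.const_mul c), integral_add (integrable_const 1)
        (hZint.const_mul l), integral_const_mul, integral_const_mul, hmean]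
      simp

theorem bennett_mgf_single
    {Ω : Type*} [MeasurableSpace Ω] (P : Measure Ω) [IsProbabilityMeasure P]
    (Z : Ω → ℝ) (hZ : Measurable Z)
    (b l : ℝ) (hb : 0 < b) (hl : 0 < l)
    (hmean : ∫ ω, Z ω ∂P = 0)
    (h2 : Integrable (fun ω => (Z ω) ^ 2) P)
    (hbd : ∀ᵐ ω ∂P, Z ω ≤ b) :
    ∫ ω, Real.exp (l * Z ω) ∂P
      ≤ Real.exp ((Real.exp (b * l) - b * l - 1) / b ^ 2 * ∫ ω, (Z ω) ^ 2 ∂P) := by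
  have hbound : ∀ᵐ ω ∂P,
      Real.exp (l * Z ω) ≤ 1 + l * Z ω + (Real.exp (b * l) - b * l - 1) / b ^ 2 * Z ω ^ 2 := by
    filter_upwards [hbd] with ω hω
    exact Real.exp_mul_le_one_add_mul_add_mul_sq hb hl hω
  calc ∫ ω, Real.exp (l * Z ω) ∂P
      ≤ 1 + (Real.exp (b * l) - b * l - 1) / b ^ 2 * ∫ ω, Z ω ^ 2 ∂P :=
        integral_exp_mul_le_one_add_mul_integral_sq hZ.aemeasurable hmean h2 hbound
    _ ≤ Real.exp ((Real.exp (b * l) - b * l - 1) / b ^ 2 * ∫ ω, Z ω ^ 2 ∂P) := by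
        rw [add_comm]
        exact Real.add_one_le_exp _
end

section
/- Let D be a distribution over X × Y, ρ a distribution over hypotheses, and μ < 1/2. Define the expected μ-tandem loss L_μ(h,h') = E_D[(1[h(X)≠Y] − μ)(1[h'(X)≠Y] − μ)]. Then E_{ρ²}[L_μ(h,h')] = E_D[(E_ρ[1[h(X)≠Y]] − μ)²], and consequently L(MV_ρ) ≤ E_{ρ²}[L_μ(h,h')] / (1/2 − μ)². -/
/-! With `Z = ∑ ρ h 1[h errs]` and `∑ ρ = 1`, the tandem identity is the expansion
`(∑ ρ h a h)² = ∑∑ ρ h ρ h' a h a h'` of `(Z - μ)² = (∑ ρ h (1[h errs] - μ))²`, integrated term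
by term. For the bound: whenever the majority vote errs, at least half of the ρ-mass errs too, so
`Z ≥ 1/2` and hence `1 ≤ (Z - μ)² / (1/2 - μ)²`; integrate this pointwise inequality over `D`. -/

open MeasureTheory

section WeightedSum

variable {ι : Type*} (s : Finset ι) (w : ι → ℝ)

lemma sq_sum_mul_eq_sum_sum (a : ι → ℝ) :
    (∑ i ∈ s, w i * a i) ^ 2 = ∑ i ∈ s, ∑ j ∈ s, w i * w j * (a i * a j) := by
  rw [sq, Finset.sum_mul_sum]
  exact Finset.sum_congr rfl fun i _ => Finset.sum_congr rfl fun j _ => by ring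

lemma sum_mul_sub_eq_sum_mul_sub (hw : ∑ i ∈ s, w i = 1) (a : ι → ℝ) (c : ℝ) :
    ∑ i ∈ s, w i * a i - c = ∑ i ∈ s, w i * (a i - c) := by
  simp only [mul_sub, Finset.sum_sub_distrib, ← Finset.sum_mul, hw, one_mul]

variable {α : Type*} [MeasurableSpace α] {μ : Measure α} {g : ι → α → ℝ}

lemma integrable_sq_sum_mul (hint : ∀ i j, Integrable (fun x => g i x * g j x) μ) :
    Integrable (fun x => (∑ i ∈ s, w i * g i x) ^ 2) μ := by
  simp_rw [sq_sum_mul_eq_sum_sum]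
  exact integrable_finsetSum _ fun i _ => integrable_finsetSum _ fun j _ => (hint i j).const_mul _

lemma sum_sum_mul_integral_eq_integral_sq (hint : ∀ i j, Integrable (fun x => g i x * g j x) μ) :
    ∑ i ∈ s, ∑ j ∈ s, w i * w j * ∫ x, g i x * g j x ∂μ = ∫ x, (∑ i ∈ s, w i * g i x) ^ 2 ∂μ := by
  simp_rw [sq_sum_mul_eq_sum_sum, ← integral_const_mul]
  rw [integral_finsetSum _ fun i _ =>
    integrable_finsetSum _ fun j _ => (hint i j).const_mul _]
  exact Finset.sum_congr rfl fun i _ =>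
    (integral_finsetSum _ fun j _ => (hint i j).const_mul _).symm

end WeightedSum

lemma half_le_sum_mul_ne_of_le_sum_mul_eq {H Y : Type*} [Fintype H] [DecidableEq Y]
    (ρ : H → ℝ) (hρ0 : ∀ h, 0 ≤ ρ h) (hρ1 : ∑ h, ρ h = 1) (v : H → Y) {y m : Y} (hmy : m ≠ y)
    (hvote : ∑ h, ρ h * (if v h = y then (1 : ℝ) else 0)
        ≤ ∑ h, ρ h * (if v h = m then (1 : ℝ) else 0)) :
    1 / 2 ≤ ∑ h, ρ h * (if v h ≠ y then (1 : ℝ) else 0) := by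
  have hm_le : ∑ h, ρ h * (if v h = m then (1 : ℝ) else 0)
      ≤ ∑ h, ρ h * (if v h ≠ y then (1 : ℝ) else 0) := by
    refine Finset.sum_le_sum fun h _ => ?_
    by_cases hvm : v h = m
    · simp [hvm, hmy]
    · rw [if_neg hvm, mul_zero]
      exact mul_nonneg (hρ0 h) (by split_ifs <;> norm_num)
  have hsplit : ∑ h, ρ h * (if v h = y then (1 : ℝ) else 0)
      + ∑ h, ρ h * (if v h ≠ y then (1 : ℝ) else 0) = 1 := by
    rw [← Finset.sum_add_distrib]
    refine (Finset.sum_congr rfl fun h _ => ?_).trans hρ1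
    by_cases hvy : v h = y <;> simp [hvy]
  linarith

lemma one_le_sq_sub_div_sq {z t c : ℝ} (hct : c < t) (htz : t ≤ z) :
    1 ≤ (z - c) ^ 2 / (t - c) ^ 2 := by
  rw [one_le_div (by nlinarith)]
  exact pow_le_pow_left₀ (by linarith) (by linarith) 2

lemma abs_ite_one_zero_sub_le (P : Prop) [Decidable P] (c : ℝ) :
    |(if P then (1 : ℝ) else 0) - c| ≤ 1 + |c| := by
  refine (abs_sub _ c).trans ?_
  gcongr
  split_ifs <;> norm_num

lemma integrable_ite_one_zero_sub_mul {α : Type*} [MeasurableSpace α] (μ : Measure α)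
    [IsFiniteMeasure μ] {P Q : α → Prop} [DecidablePred P] [DecidablePred Q]
    (hP : Measurable fun x => if P x then (1 : ℝ) else 0)
    (hQ : Measurable fun x => if Q x then (1 : ℝ) else 0) (c : ℝ) :
    Integrable (fun x => ((if P x then (1 : ℝ) else 0) - c) * ((if Q x then (1 : ℝ) else 0) - c))
      μ := by
  refine .of_bound ((hP.sub_const c).mul (hQ.sub_const c)).aestronglyMeasurable
    ((1 + |c|) * (1 + |c|)) (.of_forall fun x => ?_)
  rw [Real.norm_eq_abs, abs_mul]
  exact mul_le_mul (abs_ite_one_zero_sub_le _ c) (abs_ite_one_zero_sub_le _ c)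
    (abs_nonneg _) (by positivity)

theorem mu_tandem_bound
    {𝒳 𝒴 : Type*} [MeasurableSpace 𝒳] [MeasurableSpace 𝒴] [DecidableEq 𝒴]
    (D : Measure (𝒳 × 𝒴)) [IsProbabilityMeasure D]
    {H : Type*} [Fintype H] (hyp : H → 𝒳 → 𝒴)
    (hmeas : ∀ h : H,
      Measurable (fun p : 𝒳 × 𝒴 => if hyp h p.1 ≠ p.2 then (1 : ℝ) else 0))
    (ρ : H → ℝ) (hρ0 : ∀ h, 0 ≤ ρ h) (hρ1 : ∑ h, ρ h = 1)
    (μ : ℝ) (hμ : μ < 1/2)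
    (MV : 𝒳 → 𝒴)
    (hMVmeas : Measurable (fun p : 𝒳 × 𝒴 => if MV p.1 ≠ p.2 then (1 : ℝ) else 0))
    (hMV : ∀ x y, (∑ h, ρ h * (if hyp h x = y then (1 : ℝ) else 0))
        ≤ ∑ h, ρ h * (if hyp h x = MV x then (1 : ℝ) else 0)) :
    (∑ h, ∑ h', ρ h * ρ h' *
          ∫ p, ((if hyp h p.1 ≠ p.2 then (1 : ℝ) else 0) - μ) *
               ((if hyp h' p.1 ≠ p.2 then (1 : ℝ) else 0) - μ) ∂D)
      = ∫ p, ((∑ h, ρ h * (if hyp h p.1 ≠ p.2 then (1 : ℝ) else 0)) - μ) ^ 2 ∂D ∧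
    ∫ p, (if MV p.1 ≠ p.2 then (1 : ℝ) else 0) ∂D
      ≤ (∑ h, ∑ h', ρ h * ρ h' *
          ∫ p, ((if hyp h p.1 ≠ p.2 then (1 : ℝ) else 0) - μ) *
               ((if hyp h' p.1 ≠ p.2 then (1 : ℝ) else 0) - μ) ∂D) / (1/2 - μ) ^ 2 := by
  have hpair h h' := integrable_ite_one_zero_sub_mul D (hmeas h) (hmeas h') μ
  have hidentity := sum_sum_mul_integral_eq_integral_sq Finset.univ ρ hpair
  simp_rw [← sum_mul_sub_eq_sum_mul_sub _ ρ hρ1] at hidentity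
  refine ⟨hidentity, ?_⟩
  rw [hidentity, ← integral_div]
  have hsq := integrable_sq_sum_mul Finset.univ ρ hpair
  simp_rw [← sum_mul_sub_eq_sum_mul_sub _ ρ hρ1] at hsq
  refine integral_mono (.of_bound hMVmeas.aestronglyMeasurable 1 (.of_forall fun p => ?_))
    (hsq.div_const _) fun p => ?_
  · split_ifs <;> norm_num
  · by_cases hp : MV p.1 = p.2
    · simp only [hp, ne_eq, not_true_eq_false, if_false]
      positivity
    · rw [if_pos hp]
      exact one_le_sq_sub_div_sq hμ
        (half_le_sum_mul_ne_of_le_sum_mul_eq ρ hρ0 hρ1 (hyp · p.1) hp (hMV p.1 p.2))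
end
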